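/- Let a, b be orthonormal vectors in ℂ², ε > 0, W = a a* + ε² b b*, A = ½ (a+b)(a+b)*, f = W^{1/2} b, g = W^{-1/2} a. Then |⟨A W⁻¹ W^{1/2} f, W W^{-1/2} g⟩| = 1/2, while ‖f‖ ‖g‖ = ε. Hence no constant C (independent of W) satisfies |⟨A W⁻¹ W^{1/2} f, W W^{-1/2} g⟩| ≤ C ‖f‖ ‖g‖ for all W, f, g even though 0 ≤ A ≤ 1 (identity matrix). -/

import Mathlib

open Matrix
open scoped ComplexOrder

/-- The positive semidefinite square root of a positive semidefinite matrix
(as defined in Mathlib of December 2024, since removed). -/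
noncomputable def Matrix.PosSemidef.sqrt {n 𝕜 : Type*} [Fintype n] [RCLike 𝕜] [DecidableEq n]
    {A : Matrix n n 𝕜} (hA : Matrix.PosSemidef A) : Matrix n n 𝕜 :=
  hA.1.eigenvectorUnitary.1 * diagonal ((↑) ∘ (√·) ∘ hA.1.eigenvalues) *
    (star hA.1.eigenvectorUnitary : Matrix n n 𝕜)

/-- Euclidean norm of a vector in `ℂ^d`. -/
noncomputable def euclNorm {d : ℕ} (v : Fin d → ℂ) : ℝ :=
  ‖(EuclideanSpace.equiv (Fin d) ℂ).symm v‖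

/-!
Writing `f = W^{1/2} u` and `g = W^{-1/2} v`, the weights cancel for every positive definite `W`:
`⟨A W⁻¹ W^{1/2} f, W W^{-1/2} g⟩ = ⟨A u, v⟩`. Hence the pairing equals `⟨A b, a⟩ = 1/2`
whatever `ε` is. On the other hand `W^{1/2} = a a* + ε b b*` fixes `a` and scales `b` by `ε`,
so `‖f‖ ‖g‖ = ε`. Letting `ε → 0` along the standard basis of `ℂ²` defeats every constant `C`.
-/

section Sqrt

variable {n 𝕜 : Type*} [Fintype n] [RCLike 𝕜] [DecidableEq n]

open scoped MatrixOrder in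
lemma Matrix.PosSemidef.sqrt_eq_cfcSqrt {A : Matrix n n 𝕜} (hA : A.PosSemidef) :
    hA.sqrt = CFC.sqrt A := by
  have hcfc : hA.sqrt = hA.1.cfc Real.sqrt := by
    simp [Matrix.PosSemidef.sqrt, IsHermitian.cfc, Function.comp_def]
  rw [hcfc, ← hA.1.cfc_eq, ← cfcₙ_eq_cfc (hf0 := Real.sqrt_zero),
    ← CFC.sqrt_eq_real_sqrt A hA.nonneg]

open scoped MatrixOrder in
lemma Matrix.PosSemidef.posSemidef_sqrt {A : Matrix n n 𝕜} (hA : A.PosSemidef) :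
    hA.sqrt.PosSemidef := by
  rw [hA.sqrt_eq_cfcSqrt, ← nonneg_iff_posSemidef]
  exact CFC.sqrt_nonneg A

open scoped MatrixOrder in
lemma Matrix.PosSemidef.sqrt_mul_self {A : Matrix n n 𝕜} (hA : A.PosSemidef) :
    hA.sqrt * hA.sqrt = A := by
  rw [hA.sqrt_eq_cfcSqrt, ← sq, CFC.sq_sqrt A hA.nonneg]

open scoped MatrixOrder in
lemma Matrix.PosSemidef.eq_sqrt_of_mul_self_eq {A B : Matrix n n 𝕜} (hA : A.PosSemidef)
    (hB : B.PosSemidef) (h : B * B = A) : B = hA.sqrt := by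
  rw [hA.sqrt_eq_cfcSqrt]
  exact (CFC.sqrt_unique h hB.nonneg).symm

lemma Matrix.PosDef.sqrt_inv {A : Matrix n n 𝕜} (hA : A.PosDef) :
    hA.inv.posSemidef.sqrt = hA.posSemidef.sqrt⁻¹ := by
  refine (hA.inv.posSemidef.eq_sqrt_of_mul_self_eq hA.posSemidef.posSemidef_sqrt.inv ?_).symm
  rw [← sq, inv_pow', sq, hA.posSemidef.sqrt_mul_self]

lemma Matrix.PosDef.isUnit_det_sqrt {A : Matrix n n 𝕜} (hA : A.PosDef) :
    IsUnit hA.posSemidef.sqrt.det := by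
  have hdet := (Matrix.isUnit_iff_isUnit_det A).mp hA.isUnit
  rw [← hA.posSemidef.sqrt_mul_self, det_mul] at hdet
  exact isUnit_of_mul_isUnit_left hdet

end Sqrt

section WeightedPairing

variable {n 𝕜 : Type*} [Fintype n] [RCLike 𝕜] [DecidableEq n]

/-- The pairing `⟨A W⁻¹ W^{1/2} f, W W^{-1/2} g⟩` of the bilinear embedding. -/
noncomputable def weightedPairing (W A : Matrix n n 𝕜) (hW : W.PosDef) (f g : n → 𝕜) : 𝕜 :=
  star (W *ᵥ (hW.inv.posSemidef.sqrt *ᵥ g)) ⬝ᵥ A *ᵥ (W⁻¹ *ᵥ (hW.posSemidef.sqrt *ᵥ f))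

lemma weightedPairing_sqrt_mulVec {W : Matrix n n 𝕜} (hW : W.PosDef) (A : Matrix n n 𝕜)
    (u v : n → 𝕜) :
    weightedPairing W A hW (hW.posSemidef.sqrt *ᵥ u) (hW.inv.posSemidef.sqrt *ᵥ v) =
      star v ⬝ᵥ A *ᵥ u := by
  have hdet := (Matrix.isUnit_iff_isUnit_det W).mp hW.isUnit
  have hu : W⁻¹ *ᵥ (hW.posSemidef.sqrt *ᵥ (hW.posSemidef.sqrt *ᵥ u)) = u := by
    rw [mulVec_mulVec u, hW.posSemidef.sqrt_mul_self, mulVec_mulVec, nonsing_inv_mul W hdet,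
      one_mulVec]
  have hv : W *ᵥ (hW.inv.posSemidef.sqrt *ᵥ (hW.inv.posSemidef.sqrt *ᵥ v)) = v := by
    rw [mulVec_mulVec v, hW.inv.posSemidef.sqrt_mul_self, mulVec_mulVec, mul_nonsing_inv W hdet,
      one_mulVec]
  rw [weightedPairing, hu, hv]

end WeightedPairing

section Orthonormal

variable {n 𝕜 : Type*} [Fintype n] [RCLike 𝕜] {a b : n → 𝕜}

lemma posSemidef_vecMulVec_add_smul_vecMulVec {t : 𝕜} (ht : 0 ≤ t) :
    (vecMulVec a (star a) + t • vecMulVec b (star b)).PosSemidef :=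
  (posSemidef_vecMulVec_self_star a).add ((posSemidef_vecMulVec_self_star b).smul ht)

lemma star_dotProduct_eq_zero_symm (hab : star a ⬝ᵥ b = 0) : star b ⬝ᵥ a = 0 := by
  rw [star_dotProduct, hab, star_zero]

lemma vecMulVec_add_smul_mulVec_left (ha : star a ⬝ᵥ a = 1) (hab : star a ⬝ᵥ b = 0) (t : 𝕜) :
    (vecMulVec a (star a) + t • vecMulVec b (star b)) *ᵥ a = a := by
  simp [add_mulVec, smul_mulVec, vecMulVec_mulVec, ha, star_dotProduct_eq_zero_symm hab]

lemma vecMulVec_add_smul_mulVec_right (hb : star b ⬝ᵥ b = 1) (hab : star a ⬝ᵥ b = 0) (t : 𝕜) :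
    (vecMulVec a (star a) + t • vecMulVec b (star b)) *ᵥ b = t • b := by
  simp [add_mulVec, smul_mulVec, vecMulVec_mulVec, hb, hab]

lemma vecMulVec_add_smul_mul_vecMulVec_add_smul (ha : star a ⬝ᵥ a = 1)
    (hb : star b ⬝ᵥ b = 1) (hab : star a ⬝ᵥ b = 0) (s t : 𝕜) :
    (vecMulVec a (star a) + s • vecMulVec b (star b)) *
        (vecMulVec a (star a) + t • vecMulVec b (star b)) =
      vecMulVec a (star a) + (s * t) • vecMulVec b (star b) := by
  simp only [add_mul, mul_add, smul_mul_assoc, mul_smul_comm, vecMulVec_mul_vecMulVec, ha, hb,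
    hab, star_dotProduct_eq_zero_symm hab, one_smul, zero_smul, smul_smul,
    vecMulVec_zero, smul_zero, add_zero, zero_add]
  rw [mul_comm]

lemma sqrt_vecMulVec_add_sq_smul_vecMulVec [DecidableEq n] (ha : star a ⬝ᵥ a = 1)
    (hb : star b ⬝ᵥ b = 1) (hab : star a ⬝ᵥ b = 0) {t : 𝕜} (ht : 0 ≤ t)
    (hW : (vecMulVec a (star a) + t ^ 2 • vecMulVec b (star b)).PosSemidef) :
    hW.sqrt = vecMulVec a (star a) + t • vecMulVec b (star b) := by
  refine (hW.eq_sqrt_of_mul_self_eq (posSemidef_vecMulVec_add_smul_vecMulVec ht) ?_).symm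
  rw [vecMulVec_add_smul_mul_vecMulVec_add_smul ha hb hab, sq]

lemma star_dotProduct_half_vecMulVec_add_mulVec (ha : star a ⬝ᵥ a = 1) (hb : star b ⬝ᵥ b = 1)
    (hab : star a ⬝ᵥ b = 0) :
    star a ⬝ᵥ ((2 : 𝕜)⁻¹ • vecMulVec (a + b) (star (a + b))) *ᵥ b = 2⁻¹ := by
  simp [smul_mulVec, vecMulVec_mulVec, ha, hb, hab]

end Orthonormal

lemma euclNorm_smul {d : ℕ} (c : ℂ) (v : Fin d → ℂ) : euclNorm (c • v) = ‖c‖ * euclNorm v := by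
  rw [euclNorm, euclNorm, _root_.map_smul, norm_smul]

lemma euclNorm_eq_one {d : ℕ} {v : Fin d → ℂ} (hv : star v ⬝ᵥ v = 1) : euclNorm v = 1 := by
  have hsq : euclNorm v ^ 2 = 1 := by
    rw [euclNorm, ← inner_self_eq_norm_sq (𝕜 := ℂ), EuclideanSpace.inner_eq_star_dotProduct,
      dotProduct_comm]
    simp [hv]
  exact (pow_eq_one_iff_of_nonneg (norm_nonneg _) two_ne_zero).mp hsq

lemma euclNorm_sqrt_mulVec_mul_euclNorm_sqrt_inv_mulVec {d : ℕ} {a b : Fin d → ℂ}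
    (ha : star a ⬝ᵥ a = 1) (hb : star b ⬝ᵥ b = 1) (hab : star a ⬝ᵥ b = 0) {ε : ℝ} (hε : 0 ≤ ε)
    (hW : (vecMulVec a (star a) + (ε : ℂ) ^ 2 • vecMulVec b (star b)).PosDef) :
    euclNorm (hW.posSemidef.sqrt *ᵥ b) * euclNorm (hW.inv.posSemidef.sqrt *ᵥ a) = ε := by
  have hsqrt := sqrt_vecMulVec_add_sq_smul_vecMulVec ha hb hab (Complex.zero_le_real.mpr hε)
    hW.posSemidef
  have hf : hW.posSemidef.sqrt *ᵥ b = (ε : ℂ) • b := by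
    rw [hsqrt, vecMulVec_add_smul_mulVec_right hb hab]
  have hg : hW.inv.posSemidef.sqrt *ᵥ a = a := by
    have hSa : hW.posSemidef.sqrt *ᵥ a = a := by
      rw [hsqrt, vecMulVec_add_smul_mulVec_left ha hab]
    calc hW.inv.posSemidef.sqrt *ᵥ a
        = hW.posSemidef.sqrt⁻¹ *ᵥ (hW.posSemidef.sqrt *ᵥ a) := by rw [hW.sqrt_inv, hSa]
      _ = a := by rw [mulVec_mulVec, nonsing_inv_mul _ hW.isUnit_det_sqrt, one_mulVec]
  rw [hf, hg, euclNorm_smul, euclNorm_eq_one hb, euclNorm_eq_one ha, Complex.norm_real,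
    Real.norm_of_nonneg hε, mul_one, mul_one]

lemma norm_weightedPairing_half_vecMulVec_add {n 𝕜 : Type*} [Fintype n] [RCLike 𝕜]
    [DecidableEq n] {a b : n → 𝕜} (ha : star a ⬝ᵥ a = 1) (hb : star b ⬝ᵥ b = 1)
    (hab : star a ⬝ᵥ b = 0) {W : Matrix n n 𝕜} (hW : W.PosDef) :
    ‖weightedPairing W ((2 : 𝕜)⁻¹ • vecMulVec (a + b) (star (a + b))) hW
        (hW.posSemidef.sqrt *ᵥ b) (hW.inv.posSemidef.sqrt *ᵥ a)‖ = 1 / 2 := by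
  rw [weightedPairing_sqrt_mulVec, star_dotProduct_half_vecMulVec_add_mulVec ha hb hab]
  simp

lemma exists_norm_weightedPairing_eq_half {ε : ℝ} (hε : 0 < ε) :
    ∃ (V B : Matrix (Fin 2) (Fin 2) ℂ) (hV : V.PosDef), B.PosSemidef ∧ (1 - B).PosSemidef ∧
      ∃ u v : Fin 2 → ℂ, ‖weightedPairing V B hV u v‖ = 1 / 2 ∧ euclNorm u * euclNorm v = ε := by
  set e₀ : Fin 2 → ℂ := ![1, 0]
  set e₁ : Fin 2 → ℂ := ![0, 1]
  have hs₀ : star e₀ = e₀ := by ext i; fin_cases i <;> simp [e₀]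
  have hs₁ : star e₁ = e₁ := by ext i; fin_cases i <;> simp [e₁]
  have he₀ : star e₀ ⬝ᵥ e₀ = 1 := by simp [hs₀, e₀]
  have he₁ : star e₁ ⬝ᵥ e₁ = 1 := by simp [hs₁, e₁]
  have he₀₁ : star e₀ ⬝ᵥ e₁ = 0 := by simp [hs₀, e₀, e₁]
  have hW : (vecMulVec e₀ (star e₀) + (ε : ℂ) ^ 2 • vecMulVec e₁ (star e₁)).PosDef := by
    have hdiag : vecMulVec e₀ (star e₀) + (ε : ℂ) ^ 2 • vecMulVec e₁ (star e₁) =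
        diagonal ![1, (ε : ℂ) ^ 2] := by
      rw [hs₀, hs₁]; ext i j; fin_cases i <;> fin_cases j <;> simp [e₀, e₁]
    rw [hdiag, posDef_diagonal_iff]
    intro i
    fin_cases i <;> simp
    positivity
  have hA_le_one : (1 - (2 : ℂ)⁻¹ • vecMulVec (e₀ + e₁) (star (e₀ + e₁))).PosSemidef := by
    have hcompl : 1 - (2 : ℂ)⁻¹ • vecMulVec (e₀ + e₁) (star (e₀ + e₁)) =
        (2 : ℂ)⁻¹ • vecMulVec (e₀ - e₁) (star (e₀ - e₁)) := by
      rw [star_add, star_sub, hs₀, hs₁]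
      ext i j; fin_cases i <;> fin_cases j <;> simp [e₀, e₁] <;> norm_num
    rw [hcompl]
    exact (posSemidef_vecMulVec_self_star _).smul (by positivity)
  exact ⟨_, _, hW, (posSemidef_vecMulVec_self_star _).smul (by positivity), hA_le_one, _, _,
    norm_weightedPairing_half_vecMulVec_add he₀ he₁ he₀₁ hW,
    euclNorm_sqrt_mulVec_mul_euclNorm_sqrt_inv_mulVec he₀ he₁ he₀₁ hε.le hW⟩

theorem not_exists_norm_weightedPairing_le :
    ¬ ∃ C : ℝ, ∀ (V B : Matrix (Fin 2) (Fin 2) ℂ) (hV : V.PosDef), B.PosSemidef →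
      (1 - B).PosSemidef → ∀ u v : Fin 2 → ℂ,
        ‖weightedPairing V B hV u v‖ ≤ C * (euclNorm u * euclNorm v) := by
  rintro ⟨C, hC⟩
  set ε : ℝ := (2 * (|C| + 1))⁻¹ with hε_def
  have hε : 0 < ε := by positivity
  obtain ⟨V, B, hV, hB, hB_le_one, u, v, hpair, hnorm⟩ := exists_norm_weightedPairing_eq_half hε
  have hbound := hC V B hV hB hB_le_one u v
  rw [hpair, hnorm] at hbound
  have : C * ε < 1 / 2 := calc
    C * ε ≤ |C| * ε := mul_le_mul_of_nonneg_right (le_abs_self C) hε.le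
    _ < (|C| + 1) * ε := mul_lt_mul_of_pos_right (lt_add_one _) hε
    _ = 1 / 2 := by rw [hε_def]; field_simp
  linarith

/-- with `W = a a* + ε² b b*`, `A = ½ (a+b)(a+b)*`, `f = W^{1/2} b`,
`g = W^{-1/2} a`, we get `|⟨A W⁻¹ W^{1/2} f, W W^{-1/2} g⟩| = 1/2` while `‖f‖ ‖g‖ = ε`;
hence no constant `C` works in the inner-product form of the bilinear embedding,
even though `0 ≤ A ≤ 1`. -/
theorem bilinear_embedding_inner_failure
    (a b : Fin 2 → ℂ) (ε : ℝ) (hε : 0 < ε)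
    (ha : star a ⬝ᵥ a = 1) (hb : star b ⬝ᵥ b = 1) (hab : star a ⬝ᵥ b = 0)
    (W A : Matrix (Fin 2) (Fin 2) ℂ)
    (hW : W = vecMulVec a (star a) + ((ε : ℂ) ^ 2) • vecMulVec b (star b))
    (hA : A = (2 : ℂ)⁻¹ • vecMulVec (a + b) (star (a + b)))
    (hWpd : W.PosDef)
    (f g : Fin 2 → ℂ)
    (hf : f = hWpd.posSemidef.sqrt.mulVec b)
    (hg : g = hWpd.inv.posSemidef.sqrt.mulVec a) :
    ‖star (W.mulVec (hWpd.inv.posSemidef.sqrt.mulVec g)) ⬝ᵥ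
        A.mulVec (W⁻¹.mulVec (hWpd.posSemidef.sqrt.mulVec f))‖ = 1 / 2 ∧
    euclNorm f * euclNorm g = ε ∧
    ¬ ∃ C : ℝ, ∀ (V B : Matrix (Fin 2) (Fin 2) ℂ) (hV : V.PosDef)
        (_ : B.PosSemidef) (_ : ((1 : Matrix (Fin 2) (Fin 2) ℂ) - B).PosSemidef)
        (u v : Fin 2 → ℂ),
        ‖star (V.mulVec (hV.inv.posSemidef.sqrt.mulVec v)) ⬝ᵥ
            B.mulVec (V⁻¹.mulVec (hV.posSemidef.sqrt.mulVec u))‖ ≤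
          C * (euclNorm u * euclNorm v) := by
  subst hW hA hf hg
  exact ⟨norm_weightedPairing_half_vecMulVec_add ha hb hab hWpd,
    euclNorm_sqrt_mulVec_mul_euclNorm_sqrt_inv_mulVec ha hb hab hε.le hWpd,
    not_exists_norm_weightedPairing_le⟩
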